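/- arXiv:1412.0320 — 6 statements merged into one kernel-verified Lean document; each statement's English description precedes it below -/
import Mathlib

section
/- If Π is a normal logic program and I and I′ are both answer sets of Π with I ⊆ I′, then I = I′ (the anti-chain property of normal programs). -/
/-- A rule element: ⊤, ⊥, a variable `x`, `not x`, or `not not x`.
Variables are indexed by natural numbers; the variable `x_i` of the paper is index `i - 1`. -/
inductive RuleElem : Type
  | top : RuleElem
  | bot : RuleElem
  | pos : ℕ → RuleElem
  | neg : ℕ → RuleElem
  | negneg : ℕ → RuleElem
  deriving DecidableEq

/-- A rule `H ← B`: the head is a variable (`some x`) or ⊥ (`none`);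
the body is a finite set of rule elements. -/
structure Rule : Type where
  head : Option ℕ
  body : Finset RuleElem
  deriving DecidableEq

/-- A canonical program is a finite set of rules. -/
abbrev Program : Type := Finset Rule

/-- Satisfaction of a rule element by a set of variables. -/
def satElem (I : Set ℕ) : RuleElem → Prop
  | .top => True
  | .bot => False
  | .pos x => x ∈ I
  | .neg x => x ∉ I
  | .negneg x => x ∈ I

/-- `I ⊨ B`: `I` satisfies every element of the body `B`. -/
def satBody (I : Set ℕ) (B : Finset RuleElem) : Prop := ∀ e ∈ B, satElem I e

/-- `J` is closed under the program `Π`: for every rule `H ← B` with `J ⊨ B`,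
the head is a variable belonging to `J`. -/
def closedUnder (J : Set ℕ) (P : Program) : Prop :=
  ∀ r ∈ P, satBody J r.body → ∃ x, r.head = some x ∧ x ∈ J

/-- `Cn P`: the least set of variables closed under `P` (used for basic programs). -/
def Cn (P : Program) : Set ℕ := ⋂₀ {J : Set ℕ | closedUnder J P}

/-- The reduction of a rule element with respect to `I`. -/
def reduceElem (I : Finset ℕ) : RuleElem → RuleElem
  | .negneg x => if x ∈ I then .top else .bot
  | .neg x => if x ∈ I then .bot else .top
  | e => e

/-- The reduct `P^I` of a canonical program. -/
def reduct (P : Program) (I : Finset ℕ) : Program :=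
  P.image (fun r => ⟨r.head, r.body.image (reduceElem I)⟩)

/-- `I` is an answer set of `P` iff `I = Cn(P^I)`. -/
def isAnswerSet (P : Program) (I : Finset ℕ) : Prop :=
  (I : Set ℕ) = Cn (reduct P I)

/-- The variables occurring in a rule element. -/
def elemVars : RuleElem → Finset ℕ
  | .top => ∅
  | .bot => ∅
  | .pos x => {x}
  | .neg x => {x}
  | .negneg x => {x}

/-- The variables occurring in a rule. -/
def ruleVars (r : Rule) : Finset ℕ :=
  (r.head.elim ∅ fun x => {x}) ∪ r.body.biUnion elemVars

/-- The variables occurring in a program. -/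
def progVars (P : Program) : Finset ℕ := P.biUnion ruleVars

/-- A program is normal if no `not not x` occurs in it. -/
def isNormal (P : Program) : Prop := ∀ r ∈ P, ∀ x, RuleElem.negneg x ∉ r.body

/-- `P` is a PARITY_n program: all its variables are among `{x_1, …, x_n}`
(indices `0, …, n-1`) and its answer sets, as subsets of `{x_1, …, x_n}`,
are exactly the subsets of odd cardinality. -/
def isParityProgram (n : ℕ) (P : Program) : Prop :=
  progVars P ⊆ Finset.range n ∧
  ∀ I : Finset ℕ, isAnswerSet P I ↔ (I ⊆ Finset.range n ∧ Odd I.card)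

/-- `M(Comp(P))`, the models (subsets of `V`) of the completion of `P` over `V`:
for each variable `x ∈ V`, `x` holds iff the body of some rule with head `x` is
(classically) satisfied; and the body of no rule with head ⊥ is satisfied.
(The classical reading of `not` coincides with `satElem`.) -/
def compModels (V : Finset ℕ) (P : Program) : Set (Finset ℕ) :=
  {I | I ⊆ V ∧
    (∀ x ∈ V, (x ∈ I ↔ ∃ r ∈ P, r.head = some x ∧ satBody (↑I) r.body)) ∧
    ∀ r ∈ P, r.head = none → ¬ satBody (↑I) r.body}

/-- A program is basic: bodies contain only ⊤, ⊥ and variables. -/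
def basicProg (P : Program) : Prop :=
  ∀ r ∈ P, ∀ e ∈ r.body, e = RuleElem.top ∨ e = RuleElem.bot ∨ ∃ x, e = RuleElem.pos x

lemma reduct_basic (P : Program) (K : Finset ℕ) : basicProg (reduct P K) := by
  intro r hr e he
  rw [reduct, Finset.mem_image] at hr
  obtain ⟨r0, _, rfl⟩ := hr
  simp only [Finset.mem_image] at he
  obtain ⟨e0, _, rfl⟩ := he
  cases e0 with
  | top => exact Or.inl rfl
  | bot => exact Or.inr (Or.inl rfl)
  | pos x => exact Or.inr (Or.inr ⟨x, rfl⟩)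
  | neg x =>
    by_cases hx : x ∈ K
    · exact Or.inr (Or.inl (by simp [reduceElem, hx]))
    · exact Or.inl (by simp [reduceElem, hx])
  | negneg x =>
    by_cases hx : x ∈ K
    · exact Or.inl (by simp [reduceElem, hx])
    · exact Or.inr (Or.inl (by simp [reduceElem, hx]))

lemma cn_closed {P : Program} (hb : basicProg P) (hne : ∃ J, closedUnder J P) :
    closedUnder (Cn P) P := by
  intro r hr hsat
  obtain ⟨J0, hJ0⟩ := hne
  have key : ∀ J, closedUnder J P → satBody J r.body := by
    intro J hJ e he
    rcases hb r hr e he with h | h | ⟨x, h⟩ <;> subst h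
    · trivial
    · exact (hsat _ he).elim
    · exact (hsat _ he) _ hJ
  rcases hr0 : r.head with _ | x
  · obtain ⟨y, hy, _⟩ := hJ0 r hr (key J0 hJ0)
    rw [hr0] at hy; exact nomatch hy
  · refine ⟨x, rfl, ?_⟩
    intro J hJ
    obtain ⟨y, hy, hyJ⟩ := hJ r hr (key J hJ)
    rw [hr0] at hy
    cases hy
    exact hyJ

/-- Anti-chain property of normal programs: if `I` and `I'` are answer sets of a
normal program `P` and `I ⊆ I'`, then `I = I'`. -/
theorem antichain_property (P : Program) (hP : isNormal P) (I I' : Finset ℕ)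
    (hI : isAnswerSet P I) (hI' : isAnswerSet P I') (hsub : I ⊆ I') : I = I' := by
  have hne : ∃ J, closedUnder J (reduct P I) := by
    by_contra h
    push_neg at h
    have hemp : {J : Set ℕ | closedUnder J (reduct P I)} = ∅ := by
      ext J; simpa using h J
    have huniv : Cn (reduct P I) = Set.univ := by
      rw [Cn, hemp, Set.sInter_empty]
    exact Set.infinite_univ ((hI.trans huniv) ▸ Finset.finite_toSet I)
  have hclI : closedUnder (↑I) (reduct P I) := by
    rw [hI]; exact cn_closed (reduct_basic P I) hne
  have hclI' : closedUnder (↑I) (reduct P I') := by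
    intro r' hr' hsat
    rw [reduct, Finset.mem_image] at hr'
    obtain ⟨r, hrP, rfl⟩ := hr'
    have hsat2 : satBody (↑I) (r.body.image (reduceElem I)) := by
      intro e he
      rw [Finset.mem_image] at he
      obtain ⟨e0, he0, rfl⟩ := he
      have hs' : satElem ↑I (reduceElem I' e0) :=
        hsat _ (Finset.mem_image_of_mem _ he0)
      cases e0 with
      | top => trivial
      | bot => exact hs'.elim
      | pos x => exact hs'
      | neg x =>
        have hx' : x ∉ I' := by
          by_contra hx
          simp [reduceElem, hx, satElem] at hs'
        have hx : x ∉ I := fun h => hx' (hsub h)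
        simp [reduceElem, hx, satElem]
      | negneg x => exact absurd he0 (hP r hrP x)
    exact hclI ⟨r.head, r.body.image (reduceElem I)⟩
      (by rw [reduct]; exact Finset.mem_image_of_mem _ hrP) hsat2
  have hsub' : (↑I' : Set ℕ) ⊆ ↑I := by
    rw [hI']; exact Set.sInter_subset_of_mem hclI'
  exact Finset.Subset.antisymm hsub (fun x hx => hsub' hx)
end

section
/- For every n ≥ 3, there is no normal program Π with all its variables among {x_1,…,x_n} whose answer sets, viewed as subsets of {x_1,…,x_n}, are exactly PARITY_n (the subsets of {x_1,…,x_n} of odd cardinality). That is, PARITY_n cannot be represented by a normal program for n ≥ 3. -/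
lemma satElem_reduce_mono {I J : Set ℕ} (h : I ⊆ J) (K : Finset ℕ) (e : RuleElem)
    (he : satElem I (reduceElem K e)) : satElem J (reduceElem K e) := by
  cases e with
  | top => trivial
  | bot => exact he
  | pos x => exact h he
  | neg x => simp only [reduceElem] at *; split_ifs with hx <;> simp_all [satElem]
  | negneg x => simp only [reduceElem] at *; split_ifs with hx <;> simp_all [satElem]

lemma satBody_reduct_mono {I J : Set ℕ} (h : I ⊆ J) (K : Finset ℕ) (B : Finset RuleElem)
    (hB : satBody I (B.image (reduceElem K))) : satBody J (B.image (reduceElem K)) := by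
  intro e he
  obtain ⟨e', he', rfl⟩ := Finset.mem_image.mp he
  exact satElem_reduce_mono h K e' (hB _ he)

lemma Cn_closed (P : Program) (K : Finset ℕ) (J0 : Set ℕ)
    (hJ0 : closedUnder J0 (reduct P K)) : closedUnder (Cn (reduct P K)) (reduct P K) := by
  intro r hr hsat
  obtain ⟨r0, hr0, rfl⟩ := Finset.mem_image.mp hr
  have key : ∀ J : Set ℕ, closedUnder J (reduct P K) → ∃ x, r0.head = some x ∧ x ∈ J := by
    intro J hJ
    have hCnJ : Cn (reduct P K) ⊆ J := Set.sInter_subset_of_mem hJ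
    exact hJ ⟨r0.head, r0.body.image (reduceElem K)⟩ hr (satBody_reduct_mono hCnJ K r0.body hsat)
  obtain ⟨x, hx, _⟩ := key J0 hJ0
  refine ⟨x, hx, ?_⟩
  intro J hJ
  obtain ⟨y, hy, hyJ⟩ := key J hJ
  rw [hx] at hy
  exact (Option.some_inj.mp hy) ▸ hyJ

lemma answer_antichain (P : Program) (hN : isNormal P) (I J : Finset ℕ)
    (hI : isAnswerSet P I) (hJ : isAnswerSet P J) (hIJ : I ⊆ J) : I = J := by
  -- ↑I is closed under reduct P J
  have hclosedI : closedUnder (↑I) (reduct P I) := by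
    have hne : ∃ J0 : Set ℕ, closedUnder J0 (reduct P I) := by
      by_contra hcon
      push_neg at hcon
      have : Cn (reduct P I) = Set.univ := by
        apply Set.eq_univ_of_forall
        intro y
        intro S hS
        exact absurd hS (hcon S)
      obtain ⟨y, hy⟩ := Infinite.exists_notMem_finset I
      have : y ∈ (↑I : Set ℕ) := by rw [hI, this]; trivial
      exact hy this
    obtain ⟨J0, hJ0⟩ := hne
    rw [hI]
    exact Cn_closed P I J0 hJ0
  have hIclosedJ : closedUnder (↑I) (reduct P J) := by
    intro r hr hsat
    obtain ⟨r0, hr0, rfl⟩ := Finset.mem_image.mp hr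
    -- I satisfies the body reduced w.r.t. I
    have hsatI : satBody (↑I) (r0.body.image (reduceElem I)) := by
      intro e he
      obtain ⟨e', he', rfl⟩ := Finset.mem_image.mp he
      have hsatJ := hsat _ (Finset.mem_image_of_mem (reduceElem J) he')
      cases e' with
      | top => trivial
      | bot => exact hsatJ
      | pos x => exact hsatJ
      | neg x =>
          simp only [reduceElem] at *
          split_ifs with h1
          · split_ifs at hsatJ with h2
            · exact hsatJ
            · exact absurd (hIJ h1) h2
          · trivial
      | negneg x => exact absurd he' (hN _ hr0 x)
    have := hclosedI ⟨r0.head, r0.body.image (reduceElem I)⟩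
      (Finset.mem_image_of_mem _ hr0) hsatI
    exact this
  have hJI : (↑J : Set ℕ) ⊆ ↑I := by
    rw [hJ]
    exact Set.sInter_subset_of_mem hIclosedJ
  exact Finset.Subset.antisymm hIJ (fun x hx => hJI hx)

/-- For every `n ≥ 3`, no normal program represents PARITY_n. -/
theorem parity_not_representable_by_normal_programs (n : ℕ) (hn : 3 ≤ n) :
    ¬ ∃ P : Program, isNormal P ∧ isParityProgram n P := by
  rintro ⟨P, hN, hvars, hAns⟩
  have hI : isAnswerSet P {0} := by
    rw [hAns]
    constructor
    · intro x hx
      simp only [Finset.mem_singleton] at hx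
      subst hx
      exact Finset.mem_range.mpr (by omega)
    · simp
  have hJ : isAnswerSet P {0, 1, 2} := by
    rw [hAns]
    constructor
    · intro x hx
      fin_cases hx <;> exact Finset.mem_range.mpr (by omega)
    · decide
  have := answer_antichain P hN {0} {0, 1, 2} hI hJ (by decide)
  have : (1 : ℕ) ∈ ({0} : Finset ℕ) := this ▸ (by decide)
  simp at this
end

section
/- For every n ≥ 1 there exists a canonical program Π with all its variables among {x_1,…,x_n}, with at most n + 2^n rules, whose answer sets, viewed as subsets of {x_1,…,x_n}, are exactly PARITY_n. (PARITY can be represented by exponential size canonical programs.) -/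
/-! Auxiliary construction for `parity_in_CP`. -/

def choiceRule (x : ℕ) : Rule := ⟨some x, {RuleElem.negneg x}⟩

def cbody (n : ℕ) (S : Finset ℕ) : Finset RuleElem :=
  (Finset.range n).image (fun y => if y ∈ S then RuleElem.pos y else RuleElem.neg y)

def conRule (n : ℕ) (S : Finset ℕ) : Rule := ⟨none, cbody n S⟩

def evens (n : ℕ) : Finset (Finset ℕ) :=
  (Finset.range n).powerset.filter fun S => Even S.card

def pprog (n : ℕ) : Program :=
  (Finset.range n).image choiceRule ∪ (evens n).image (conRule n)

/-- The condition "J satisfies the reduct (w.r.t. I) of the constraint body for S". -/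
def ccond (n : ℕ) (I : Finset ℕ) (J : Set ℕ) (S : Finset ℕ) : Prop :=
  ∀ y ∈ Finset.range n, (y ∈ S → y ∈ J) ∧ (y ∉ S → y ∉ I)

lemma satBody_image {α : Type*} (J : Set ℕ) (g : α → RuleElem) (B : Finset α) :
    satBody J (B.image g) ↔ ∀ e ∈ B, satElem J (g e) := by
  constructor
  · intro h e he; exact h _ (Finset.mem_image_of_mem g he)
  · intro h e he
    rcases Finset.mem_image.1 he with ⟨e', he', rfl⟩
    exact h e' he'

lemma satBody_reduct_choice (I : Finset ℕ) (J : Set ℕ) (x : ℕ) :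
    satBody J ((choiceRule x).body.image (reduceElem I)) ↔ x ∈ I := by
  rw [satBody_image]
  simp only [choiceRule, Finset.mem_singleton, forall_eq]
  by_cases hx : x ∈ I <;> simp [reduceElem, hx, satElem]

lemma satBody_reduct_con (n : ℕ) (I : Finset ℕ) (J : Set ℕ) (S : Finset ℕ) :
    satBody J ((conRule n S).body.image (reduceElem I)) ↔ ccond n I J S := by
  simp only [conRule, cbody, Finset.image_image]
  rw [satBody_image, ccond]
  apply forall₂_congr
  intro y _
  by_cases hS : y ∈ S
  · simp [hS, Function.comp, reduceElem, satElem]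
  · by_cases hI : y ∈ I <;> simp [hS, hI, Function.comp, reduceElem, satElem]

lemma closed_iff (n : ℕ) (I : Finset ℕ) (J : Set ℕ) :
    closedUnder J (reduct (pprog n) I) ↔
      ((∀ x ∈ Finset.range n, x ∈ I → x ∈ J) ∧
       ∀ S ∈ evens n, ¬ ccond n I J S) := by
  unfold reduct pprog
  rw [Finset.image_union, Finset.image_image, Finset.image_image]
  constructor
  · intro h
    constructor
    · intro x hx hxI
      have := h _ (Finset.mem_union_left _ (Finset.mem_image_of_mem _ hx))
        ((satBody_reduct_choice I J x).2 hxI)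
      rcases this with ⟨x', hx', hx'J⟩
      simp only [choiceRule, Function.comp, Option.some.injEq] at hx'
      exact hx' ▸ hx'J
    · intro S hS hc
      have := h _ (Finset.mem_union_right _ (Finset.mem_image_of_mem _ hS))
        ((satBody_reduct_con n I J S).2 hc)
      rcases this with ⟨x, hx, _⟩
      simp [conRule, Function.comp] at hx
  · rintro ⟨h1, h2⟩ r hr hsat
    rcases Finset.mem_union.1 hr with hr | hr
    · rcases Finset.mem_image.1 hr with ⟨x, hx, rfl⟩
      refine ⟨x, rfl, h1 x hx ?_⟩
      exact (satBody_reduct_choice I J x).1 hsat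
    · rcases Finset.mem_image.1 hr with ⟨S, hS, rfl⟩
      exact absurd ((satBody_reduct_con n I J S).1 hsat) (h2 S hS)

lemma ccond_mono {n : ℕ} {I : Finset ℕ} {J K : Set ℕ} (hJK : J ⊆ K)
    (h : ccond n I J S) : ccond n I K S := by
  intro y hy
  exact ⟨fun hS => hJK ((h y hy).1 hS), (h y hy).2⟩

lemma coe_closed_of_odd {n : ℕ} {I : Finset ℕ} (h1 : I ⊆ Finset.range n)
    (h2 : Odd I.card) : closedUnder (↑I) (reduct (pprog n) I) := by
  rw [closed_iff]
  refine ⟨fun x _ hx => hx, ?_⟩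
  rintro S hS hc
  rw [evens, Finset.mem_filter, Finset.mem_powerset] at hS
  have : I = S := by
    ext y
    constructor
    · intro hy
      by_contra hyS
      exact (hc y (h1 hy)).2 hyS hy
    · intro hy
      exact (hc y (hS.1 hy)).1 hy
  rw [this] at h2
  exact (Nat.not_even_iff_odd.2 h2) hS.2

lemma answer_of_odd {n : ℕ} {I : Finset ℕ} (h1 : I ⊆ Finset.range n)
    (h2 : Odd I.card) : isAnswerSet (pprog n) I := by
  unfold isAnswerSet Cn
  apply le_antisymm
  · intro x hx J hJ
    rw [Set.mem_setOf_eq, closed_iff] at hJ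
    exact hJ.1 x (h1 hx) hx
  · exact Set.sInter_subset_of_mem (coe_closed_of_odd h1 h2)

lemma answer_spec {n : ℕ} {I : Finset ℕ} (h : isAnswerSet (pprog n) I) :
    I ⊆ Finset.range n ∧ Odd I.card := by
  unfold isAnswerSet Cn at h
  -- the family of closed sets is nonempty
  have hne : ∃ J : Set ℕ, closedUnder J (reduct (pprog n) I) := by
    by_contra hno
    push_neg at hno
    have : {J : Set ℕ | closedUnder J (reduct (pprog n) I)} = ∅ := by
      ext J; simp [hno J]
    rw [this, Set.sInter_empty] at h
    exact (Set.infinite_univ (α := ℕ)) (h ▸ I.finite_toSet)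
  -- ↑I satisfies the two conditions of `closed_iff`
  have hI2 : ∀ S ∈ evens n, ¬ ccond n I (↑I) S := by
    intro S hS hc
    rcases hne with ⟨J, hJ⟩
    have hJ' := hJ
    rw [closed_iff] at hJ'
    refine hJ'.2 S hS (ccond_mono ?_ hc)
    rw [h]
    exact Set.sInter_subset_of_mem hJ
  -- I ⊆ range n : the set ↑(I ∩ range n) is closed
  have hKclosed : closedUnder (↑(I ∩ Finset.range n)) (reduct (pprog n) I) := by
    rw [closed_iff]
    constructor
    · intro x hx hxI
      exact Finset.mem_coe.2 (Finset.mem_inter.2 ⟨hxI, hx⟩)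
    · intro S hS hc
      refine hI2 S hS (ccond_mono ?_ hc)
      intro y hy
      exact (Finset.mem_inter.1 hy).1
  have hsub : I ⊆ Finset.range n := by
    intro x hx
    have : (x : ℕ) ∈ (↑(I ∩ Finset.range n) : Set ℕ) := by
      have := h ▸ (Finset.mem_coe.2 hx)
      exact this _ hKclosed
    exact (Finset.mem_inter.1 (Finset.mem_coe.1 this)).2
  refine ⟨hsub, ?_⟩
  by_contra hodd
  rw [Nat.not_odd_iff_even] at hodd
  have hSI : I ∈ evens n := by
    rw [evens, Finset.mem_filter, Finset.mem_powerset]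
    exact ⟨hsub, hodd⟩
  apply hI2 I hSI
  intro y _
  exact ⟨fun hy => hy, fun hy => hy⟩

lemma pprog_vars (n : ℕ) : progVars (pprog n) ⊆ Finset.range n := by
  unfold progVars
  intro v hv
  rcases Finset.mem_biUnion.1 hv with ⟨r, hr, hvr⟩
  rcases Finset.mem_union.1 hr with hr | hr
  · rcases Finset.mem_image.1 hr with ⟨x, hx, rfl⟩
    simp only [choiceRule, ruleVars, Option.elim, Finset.mem_union,
      Finset.mem_biUnion, Finset.mem_singleton] at hvr
    rcases hvr with hvr | ⟨e, he, hve⟩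
    · exact hvr ▸ hx
    · subst he
      simp only [elemVars, Finset.mem_singleton] at hve
      exact hve ▸ hx
  · rcases Finset.mem_image.1 hr with ⟨S, hS, rfl⟩
    simp only [conRule, ruleVars, Option.elim, Finset.empty_union,
      Finset.mem_biUnion, cbody, Finset.mem_image] at hvr
    rcases hvr with ⟨e, ⟨y, hy, he⟩, hve⟩
    subst he
    by_cases hyS : y ∈ S <;> simp [hyS, elemVars] at hve <;> exact hve ▸ hy

lemma pprog_card (n : ℕ) : (pprog n).card ≤ n + 2 ^ n := by
  calc (pprog n).card
      ≤ ((Finset.range n).image choiceRule).card + ((evens n).image (conRule n)).card :=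
        Finset.card_union_le _ _
    _ ≤ n + 2 ^ n := by
        refine Nat.add_le_add ?_ ?_
        · exact le_trans (Finset.card_image_le) (le_of_eq (Finset.card_range n))
        · refine le_trans (Finset.card_image_le) ?_
          refine le_trans (Finset.card_filter_le _ _) ?_
          rw [Finset.card_powerset, Finset.card_range]

/-- PARITY can be represented by exponential size canonical programs: for every
`n ≥ 1` there is a canonical program with at most `n + 2^n` rules representing PARITY_n. -/
theorem parity_in_CP (n : ℕ) (hn : 1 ≤ n) :
    ∃ P : Program, isParityProgram n P ∧ P.card ≤ n + 2 ^ n := by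
  refine ⟨pprog n, ⟨pprog_vars n, fun I => ⟨answer_spec, fun h => answer_of_odd h.1 h.2⟩⟩, pprog_card n⟩
end

section
/- Lin–Zhao Theorem for canonical programs: for every canonical program Π over a finite variable set V, the answer sets of Π are exactly the subsets of V that are models of Comp(Π) ∪ LF(Π), i.e., Ans(Π) = M(Comp(Π) ∪ LF(Π)). -/
/-- The dependency graph of `P` has an edge `(x, y)` iff some rule `x ← B` of `P`
has `y ∈ var(B)`. -/
def depEdge (P : Program) (x y : ℕ) : Prop :=
  ∃ r ∈ P, r.head = some x ∧ RuleElem.pos y ∈ r.body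

/-- `U` is a loop of `P`: a nonempty set of variables of `P` which is either a
singleton `{x}` with an edge `(x, x)`, or has at least two elements and induces a
strongly connected subgraph of the dependency graph. -/
def isLoop (P : Program) (U : Finset ℕ) : Prop :=
  U.Nonempty ∧ U ⊆ progVars P ∧
    ((∃ x, U = {x} ∧ depEdge P x x) ∨
      (2 ≤ U.card ∧ ∀ x ∈ U, ∀ y ∈ U,
        Relation.ReflTransGen (fun a b => a ∈ U ∧ b ∈ U ∧ depEdge P a b) x y))

/-- `I` satisfies all loop formulas of `P`: for every loop `U`, if the body of no rule
in `R⁻(U, P)` is satisfied by `I`, then no variable of `U` is in `I`. -/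
def satLoopFormulas (P : Program) (I : Finset ℕ) : Prop :=
  ∀ U : Finset ℕ, isLoop P U →
    (¬ ∃ r ∈ P, (∃ x ∈ U, r.head = some x) ∧ (∀ y ∈ U, RuleElem.pos y ∉ r.body) ∧
        satBody (↑I) r.body) →
    ∀ x ∈ U, x ∉ I

/-! ### Auxiliary machinery for the Lin–Zhao theorem -/

/-- Satisfaction of a rule element relative to a pair `(I, J)`:
`I` interprets the negative (`not`) part, `J` the positive part. -/
def satElemR (I J : Set ℕ) : RuleElem → Prop
  | .top => True
  | .bot => False
  | .pos x => x ∈ J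
  | .neg x => x ∉ I
  | .negneg x => x ∈ I

def satBodyR (I J : Set ℕ) (B : Finset RuleElem) : Prop := ∀ e ∈ B, satElemR I J e

/-- `J` is closed under the reduct of `P` w.r.t. `I`, stated without the reduct. -/
def closedR (P : Program) (I J : Set ℕ) : Prop :=
  ∀ r ∈ P, satBodyR I J r.body → ∃ x, r.head = some x ∧ x ∈ J

def CnR (P : Program) (I : Set ℕ) : Set ℕ := ⋂₀ {J | closedR P I J}

lemma satElem_reduceElem (I : Finset ℕ) (J : Set ℕ) (e : RuleElem) :
    satElem J (reduceElem I e) ↔ satElemR (↑I) J e := by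
  cases e <;> simp only [reduceElem, satElem, satElemR]
  · rename_i x
    split_ifs with h <;> simp [satElem, h]
  · rename_i x
    split_ifs with h <;> simp [satElem, h]

lemma closedUnder_reduct_iff (P : Program) (I : Finset ℕ) (J : Set ℕ) :
    closedUnder J (reduct P I) ↔ closedR P (↑I) J := by
  unfold closedUnder closedR reduct
  constructor
  · intro h r hr hb
    have := h ⟨r.head, r.body.image (reduceElem I)⟩ (Finset.mem_image_of_mem _ hr)
    apply this
    intro e he
    simp only [Finset.mem_image] at he
    obtain ⟨e', he', rfl⟩ := he
    exact (satElem_reduceElem I J e').2 (hb e' he')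
  · intro h r hr hb
    simp only [Finset.mem_image] at hr
    obtain ⟨r', hr', rfl⟩ := hr
    apply h r' hr'
    intro e he
    exact (satElem_reduceElem I J e).1 (hb _ (Finset.mem_image_of_mem _ he))

lemma Cn_reduct (P : Program) (I : Finset ℕ) : Cn (reduct P I) = CnR P ↑I := by
  have h : {J : Set ℕ | closedUnder J (reduct P I)} = {J : Set ℕ | closedR P (↑I) J} := by
    ext J
    exact closedUnder_reduct_iff P I J
  unfold Cn CnR
  rw [h]

lemma satBodyR_mono {I J J' : Set ℕ} (h : J ⊆ J') {B : Finset RuleElem}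
    (hb : satBodyR I J B) : satBodyR I J' B := by
  intro e he
  have := hb e he
  cases e <;> simp only [satElemR] at this ⊢
  · exact h this
  · exact this
  · exact this

lemma satBodyR_diff {I J J' : Set ℕ} {B : Finset RuleElem}
    (hb : satBodyR I J B) (hb' : ¬ satBodyR I J' B) :
    ∃ y, RuleElem.pos y ∈ B ∧ y ∈ J ∧ y ∉ J' := by
  simp only [satBodyR, not_forall] at hb'
  obtain ⟨e, he, hne⟩ := hb'
  have h1 := hb e he
  cases e with
  | top => exact absurd trivial hne
  | bot => exact False.elim h1
  | pos x => exact ⟨x, he, h1, hne⟩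
  | neg x => exact absurd h1 hne
  | negneg x => exact absurd h1 hne

lemma satBodyR_self (I : Finset ℕ) (B : Finset RuleElem) :
    satBodyR (↑I) (↑I) B ↔ satBody (↑I) B := by
  unfold satBodyR satBody
  constructor <;> intro h e he <;> have := h e he <;>
    cases e <;> simpa [satElemR, satElem] using this

lemma CnR_subset {P : Program} {I J : Set ℕ} (h : closedR P I J) : CnR P I ⊆ J :=
  Set.sInter_subset_of_mem h

lemma CnR_closed {P : Program} {I : Set ℕ} (hex : ∃ J, closedR P I J) :
    closedR P I (CnR P I) := by
  obtain ⟨J₀, hJ₀⟩ := hex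
  intro r hr hb
  obtain ⟨x, hx, _⟩ := hJ₀ r hr (satBodyR_mono (CnR_subset hJ₀) hb)
  refine ⟨x, hx, ?_⟩
  intro J hJ
  obtain ⟨y, hy, hyJ⟩ := hJ r hr (satBodyR_mono (CnR_subset hJ) hb)
  rw [hx] at hy
  cases hy
  exact hyJ

lemma head_mem_progVars {P : Program} {r : Rule} {x : ℕ} (hr : r ∈ P)
    (hx : r.head = some x) : x ∈ progVars P := by
  apply Finset.mem_biUnion.2 ⟨r, hr, ?_⟩
  unfold ruleVars
  rw [hx]
  exact Finset.mem_union_left _ (Finset.mem_singleton_self x)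

/-- Lin–Zhao Theorem: the answer sets of a canonical program `P` over a finite
variable set `V` are exactly the subsets of `V` that are models of
`Comp(P) ∪ LF(P)`. -/
theorem lin_zhao (V : Finset ℕ) (P : Program) (hV : progVars P ⊆ V) :
    ∀ I : Finset ℕ,
      isAnswerSet P I ↔ (I ∈ compModels V P ∧ satLoopFormulas P I) := by
  classical
  intro I
  unfold isAnswerSet
  rw [Cn_reduct]
  constructor
  · -- forward direction
    intro hI
    have hex : ∃ J, closedR P (↑I) J := by
      by_contra h
      push_neg at h
      have hempty : {J : Set ℕ | closedR P (↑I) J} = ∅ :=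
        Set.eq_empty_iff_forall_notMem.2 h
      have huniv : CnR P (↑I) = Set.univ := by
        unfold CnR; rw [hempty, Set.sInter_empty]
      rw [huniv] at hI
      exact Set.infinite_univ (hI ▸ I.finite_toSet)
    have hclosedI : closedR P (↑I) (↑I) := by
      have h := CnR_closed hex
      rwa [← hI] at h
    -- I ⊆ V
    have hIK : (↑I : Set ℕ) ⊆ ↑I ∩ ↑(progVars P) := by
      have hK : closedR P (↑I) (↑I ∩ ↑(progVars P)) := by
        intro r hr hb
        obtain ⟨x, hx, hxI⟩ := hclosedI r hr
          (satBodyR_mono (Set.inter_subset_left) hb)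
        exact ⟨x, hx, hxI, head_mem_progVars hr hx⟩
      calc (↑I : Set ℕ) = CnR P ↑I := hI
        _ ⊆ _ := CnR_subset hK
    have hIV : I ⊆ V := by
      intro x hx
      have := hIK hx
      exact hV (by exact_mod_cast this.2)
    refine ⟨⟨hIV, ?_, ?_⟩, ?_⟩
    · -- completion equivalence
      intro x hxV
      constructor
      · -- x ∈ I → supported
        intro hxI
        by_contra hns
        push_neg at hns
        have hJ : closedR P (↑I) (↑I \ {x}) := by
          intro r hr hb
          have hbI : satBodyR (↑I) (↑I) r.body :=
            satBodyR_mono Set.diff_subset hb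
          obtain ⟨y, hy, hyI⟩ := hclosedI r hr hbI
          refine ⟨y, hy, hyI, ?_⟩
          intro hyx
          rw [Set.mem_singleton_iff] at hyx
          subst hyx
          exact hns r hr hy ((satBodyR_self I r.body).1 hbI)
        have : (x : ℕ) ∈ (↑I : Set ℕ) \ {x} := by
          apply CnR_subset hJ
          rw [← hI]; exact_mod_cast hxI
        exact this.2 rfl
      · -- supported → x ∈ I
        rintro ⟨r, hr, hhead, hsat⟩
        obtain ⟨y, hy, hyI⟩ := hclosedI r hr ((satBodyR_self I r.body).2 hsat)
        rw [hhead] at hy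
        cases hy
        exact_mod_cast hyI
    · -- constraints
      intro r hr hhead hsat
      obtain ⟨y, hy, _⟩ := hclosedI r hr ((satBodyR_self I r.body).2 hsat)
      rw [hhead] at hy
      cases hy
    · -- loop formulas
      intro U _hloop hnoext x hxU
      intro hxI
      have hJ : closedR P (↑I) (↑I \ ↑U) := by
        intro r hr hb
        have hbI : satBodyR (↑I) (↑I) r.body := satBodyR_mono Set.diff_subset hb
        obtain ⟨y, hy, hyI⟩ := hclosedI r hr hbI
        refine ⟨y, hy, hyI, ?_⟩
        intro hyU
        have hyU' : y ∈ U := by exact_mod_cast hyU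
        apply hnoext
        refine ⟨r, hr, ⟨y, hyU', hy⟩, ?_, (satBodyR_self I r.body).1 hbI⟩
        intro z hzU hzb
        have := hb _ hzb
        simp only [satElemR] at this
        exact this.2 (by exact_mod_cast hzU)
      have : (x : ℕ) ∈ (↑I : Set ℕ) \ ↑U := by
        apply CnR_subset hJ
        rw [← hI]; exact_mod_cast hxI
      exact this.2 (by exact_mod_cast hxU)
  · -- backward direction
    rintro ⟨⟨hIV, hcomp, hcons⟩, hlf⟩
    have hclosedI : closedR P (↑I) (↑I) := by
      intro r hr hb
      have hsat : satBody (↑I) r.body := (satBodyR_self I r.body).1 hb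
      match hh : r.head with
      | none => exact absurd hsat (hcons r hr hh)
      | some x =>
        have hxV : x ∈ V := hV (head_mem_progVars hr hh)
        have hxI : x ∈ I := (hcomp x hxV).2 ⟨r, hr, hh, hsat⟩
        exact ⟨x, rfl, by exact_mod_cast hxI⟩
    set C : Set ℕ := CnR P ↑I with hC
    have hCsub : C ⊆ ↑I := CnR_subset hclosedI
    have hCclosed : closedR P (↑I) C := CnR_closed ⟨↑I, hclosedI⟩
    have hsub : (↑I : Set ℕ) ⊆ C := by
      by_contra hns
      -- the set of unfounded atoms of I
      set E : Finset ℕ := I.filter (fun a => a ∉ C) with hE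
      have hEne : E.Nonempty := by
        rw [Set.not_subset] at hns
        obtain ⟨a, haI, haC⟩ := hns
        exact ⟨a, Finset.mem_filter.2 ⟨by exact_mod_cast haI, haC⟩⟩
      have hEI : ∀ a ∈ E, a ∈ I := fun a ha => (Finset.mem_filter.1 ha).1
      have hEC : ∀ a ∈ E, a ∉ C := fun a ha => (Finset.mem_filter.1 ha).2
      -- claim (a): every satisfied rule with head in E has a positive atom in E
      have claimA : ∀ a ∈ E, ∀ r ∈ P, r.head = some a → satBody (↑I) r.body →
          ∃ b ∈ E, RuleElem.pos b ∈ r.body := by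
        intro a ha r hr hhead hsat
        have hnb : ¬ satBodyR (↑I) C r.body := by
          intro hb
          obtain ⟨y, hy, hyC⟩ := hCclosed r hr hb
          rw [hhead] at hy
          cases hy
          exact hEC a ha hyC
        obtain ⟨y, hyb, hyI, hyC⟩ :=
          satBodyR_diff ((satBodyR_self I r.body).2 hsat) hnb
        exact ⟨y, Finset.mem_filter.2 ⟨by exact_mod_cast hyI, hyC⟩, hyb⟩
      -- claim (b): every atom in E has a satisfied rule
      have claimB : ∀ a ∈ E, ∃ r ∈ P, r.head = some a ∧ satBody (↑I) r.body := by
        intro a ha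
        exact (hcomp a (hIV (hEI a ha))).1 (hEI a ha)
      -- the graph on E
      set Edge : ℕ → ℕ → Prop := fun a b => a ∈ E ∧ b ∈ E ∧ depEdge P a b with hEdge
      set Reach : ℕ → ℕ → Prop := Relation.ReflTransGen Edge with hReach
      set R : ℕ → Finset ℕ := fun a => E.filter (fun b => Reach a b) with hR
      obtain ⟨x0, hx0E, hx0min⟩ :=
        Finset.exists_min_image E (fun a => (R a).card) hEne
      set U : Finset ℕ := R x0 with hU
      have hmemU : ∀ b, b ∈ U ↔ (b ∈ E ∧ Reach x0 b) := by
        intro b; rw [hU, hR]; simp [Finset.mem_filter]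
      have hx0U : x0 ∈ U := (hmemU x0).2 ⟨hx0E, Relation.ReflTransGen.refl⟩
      have hUE : U ⊆ E := fun b hb => ((hmemU b).1 hb).1
      -- every member of U reaches back to x0
      have hback : ∀ y ∈ U, Reach y x0 := by
        intro y hy
        have hyE := hUE hy
        have hsubRy : R y ⊆ R x0 := by
          intro b hb
          rw [hR] at hb ⊢
          simp only [Finset.mem_filter] at hb ⊢
          exact ⟨hb.1, ((hmemU y).1 hy).2.trans hb.2⟩
        have : R y = R x0 :=
          Finset.eq_of_subset_of_card_le hsubRy (hx0min y hyE)
        have : x0 ∈ R y := by rw [this]; exact hx0U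
        rw [hR] at this
        exact (Finset.mem_filter.1 this).2
      -- reach paths starting from U stay in U
      have hpath : ∀ y z, Reach y z → Reach x0 y →
          Relation.ReflTransGen (fun a b => a ∈ U ∧ b ∈ U ∧ depEdge P a b) y z := by
        intro y z hyz hx0y
        induction hyz with
        | refl => exact Relation.ReflTransGen.refl
        | tail hyb hbc ih =>
          rename_i b c
          have hbU : b ∈ U := (hmemU b).2 ⟨hbc.1, hx0y.trans hyb⟩
          have hcU : c ∈ U := (hmemU c).2 ⟨hbc.2.1, (hx0y.trans hyb).tail hbc⟩
          exact (ih).tail ⟨hbU, hcU, hbc.2.2⟩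
      -- no external support for U
      have hnoext : ¬ ∃ r ∈ P, (∃ x ∈ U, r.head = some x) ∧
          (∀ y ∈ U, RuleElem.pos y ∉ r.body) ∧ satBody (↑I) r.body := by
        rintro ⟨r, hrP, ⟨a, haU, hhead⟩, hnopos, hsat⟩
        obtain ⟨b, hbE, hbmem⟩ := claimA a (hUE haU) r hrP hhead hsat
        have hedge : Edge a b := ⟨hUE haU, hbE, r, hrP, hhead, hbmem⟩
        have hbU : b ∈ U := (hmemU b).2 ⟨hbE, ((hmemU a).1 haU).2.tail hedge⟩
        exact hnopos b hbU hbmem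
      -- U is a loop
      have hloop : isLoop P U := by
        refine ⟨⟨x0, hx0U⟩, ?_, ?_⟩
        · intro a ha
          obtain ⟨r, hr, hhead, _⟩ := claimB a (hUE ha)
          exact head_mem_progVars hr hhead
        · by_cases h2 : 2 ≤ U.card
          · right
            refine ⟨h2, ?_⟩
            intro y hy z hz
            exact hpath y z ((hback y hy).trans ((hmemU z).1 hz).2)
              ((hmemU y).1 hy).2
          · left
            have hcard : U.card = 1 := by
              have h1 : 1 ≤ U.card := Finset.card_pos.2 ⟨x0, hx0U⟩
              omega
            obtain ⟨a, ha⟩ := Finset.card_eq_one.1 hcard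
            have hax0 : a = x0 := by
              have := hx0U; rw [ha, Finset.mem_singleton] at this
              exact this.symm
            subst hax0
            refine ⟨a, ha, ?_⟩
            obtain ⟨r, hr, hhead, hsat⟩ := claimB a hx0E
            obtain ⟨b, hbE, hbmem⟩ := claimA a hx0E r hr hhead hsat
            have hedge : Edge a b := ⟨hx0E, hbE, r, hr, hhead, hbmem⟩
            have hbU : b ∈ U :=
              (hmemU b).2 ⟨hbE, Relation.ReflTransGen.single hedge⟩
            rw [ha, Finset.mem_singleton] at hbU
            subst hbU
            exact ⟨r, hr, hhead, hbmem⟩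
      have := hlf U hloop hnoext x0 hx0U
      exact this (hEI x0 hx0E)
    exact Set.Subset.antisymm hsub hCsub
end

section
/- Every answer set of a canonical program Π over a finite variable set V is a model of its completion Comp(Π), i.e., Ans(Π) ⊆ M(Comp(Π)). -/
lemma satElem_reduce (I : Finset ℕ) (e : RuleElem) :
    satElem (↑I) (reduceElem I e) ↔ satElem (↑I) e := by
  cases e with
  | top => simp [reduceElem, satElem]
  | bot => simp [reduceElem, satElem]
  | pos x => simp [reduceElem, satElem]
  | neg x => by_cases h : x ∈ I <;> simp [reduceElem, satElem, h]
  | negneg x => by_cases h : x ∈ I <;> simp [reduceElem, satElem, h]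

lemma satBody_reduce (I : Finset ℕ) (B : Finset RuleElem) :
    satBody (↑I) (B.image (reduceElem I)) ↔ satBody (↑I) B := by
  constructor
  · intro h e he
    exact (satElem_reduce I e).1 (h _ (Finset.mem_image_of_mem _ he))
  · intro h e he
    obtain ⟨e', he', rfl⟩ := Finset.mem_image.1 he
    exact (satElem_reduce I e').2 (h _ he')

/-- Reduced elements are never `neg`/`negneg`. -/
lemma reduce_basic (I : Finset ℕ) (e : RuleElem) :
    (∀ x, reduceElem I e ≠ .neg x) ∧ (∀ x, reduceElem I e ≠ .negneg x) := by
  cases e <;> simp only [reduceElem] <;> first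
    | (constructor <;> intro x <;> split <;> simp)
    | (constructor <;> intro x <;> simp)

lemma satElem_mono {J J' : Set ℕ} (h : J ⊆ J') (e : RuleElem)
    (h1 : ∀ x, e ≠ .neg x) (h2 : ∀ x, e ≠ .negneg x)
    (hse : satElem J e) : satElem J' e := by
  cases e with
  | top => trivial
  | bot => exact hse.elim
  | pos x => exact h hse
  | neg x => exact absurd rfl (h1 x)
  | negneg x => exact absurd rfl (h2 x)

lemma satBody_mono {J J' : Set ℕ} (h : J ⊆ J') (I : Finset ℕ) (B : Finset RuleElem)
    (hs : satBody J (B.image (reduceElem I))) : satBody J' (B.image (reduceElem I)) := by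
  intro e he
  obtain ⟨e', _, rfl⟩ := Finset.mem_image.1 he
  obtain ⟨h1, h2⟩ := reduce_basic I e'
  exact satElem_mono h _ h1 h2 (hs _ he)

lemma reduct_body (P : Program) (I : Finset ℕ) {r : Rule} (hr : r ∈ reduct P I) :
    ∃ r0 ∈ P, r.head = r0.head ∧ r.body = r0.body.image (reduceElem I) := by
  obtain ⟨r0, h0, rfl⟩ := Finset.mem_image.1 hr
  exact ⟨r0, h0, rfl, rfl⟩

/-- Every answer set of a canonical program `P` over a finite variable set `V` is a
model of its completion: `Ans(P) ⊆ M(Comp(P))`. -/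
theorem answer_set_is_completion_model (V : Finset ℕ) (P : Program)
    (hV : progVars P ⊆ V) :
    ∀ I : Finset ℕ, isAnswerSet P I → I ∈ compModels V P := by
  intro I hI
  unfold isAnswerSet at hI
  -- the family of closed sets is nonempty
  have hS : ∃ J, closedUnder J (reduct P I) := by
    by_contra h
    push_neg at h
    have hempty : {J : Set ℕ | closedUnder J (reduct P I)} = ∅ := by
      ext J; simp [h J]
    have : (↑I : Set ℕ) = Set.univ := by
      rw [hI]; unfold Cn; rw [hempty, Set.sInter_empty]
    exact (Set.infinite_univ (α := ℕ)) (this ▸ I.finite_toSet)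
  obtain ⟨J0, hJ0⟩ := hS
  -- I is closed under the reduct
  have hclosed : closedUnder (↑I) (reduct P I) := by
    rw [hI]
    intro r hr hb
    obtain ⟨r0, h0, hhead, hbody⟩ := reduct_body P I hr
    have hsub0 : Cn (reduct P I) ⊆ J0 := Set.sInter_subset_of_mem hJ0
    obtain ⟨x, hx, _⟩ := hJ0 r hr (by rw [hbody] at hb ⊢; exact satBody_mono hsub0 I _ hb)
    refine ⟨x, hx, ?_⟩
    intro J hJ
    obtain ⟨y, hy, hyJ⟩ := hJ r hr
      (by rw [hbody] at hb ⊢; exact satBody_mono (Set.sInter_subset_of_mem hJ) I _ hb)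
    rw [hx] at hy
    exact (Option.some.injEq _ _ ▸ hy : x = y) ▸ hyJ
  -- supportedness: every x ∈ I has a supporting rule
  have hsupp : ∀ x ∈ I, ∃ r ∈ P, r.head = some x ∧ satBody (↑I) r.body := by
    intro x hx
    by_contra hno
    push_neg at hno
    have hJclosed : closedUnder ((↑I : Set ℕ) \ {x}) (reduct P I) := by
      intro r hr hb
      obtain ⟨r0, h0, hhead, hbody⟩ := reduct_body P I hr
      have hbI : satBody (↑I) r.body := by
        rw [hbody] at hb ⊢
        exact satBody_mono Set.diff_subset I _ hb
      obtain ⟨y, hy, hyI⟩ := hclosed r hr hbI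
      refine ⟨y, hy, hyI, ?_⟩
      intro hyx
      rw [Set.mem_singleton_iff] at hyx
      subst hyx
      exact hno r0 h0 (hhead ▸ hy)
        ((satBody_reduce I r0.body).1 (hbody ▸ hbI))
    have hsub : Cn (reduct P I) ⊆ (↑I : Set ℕ) \ {x} :=
      Set.sInter_subset_of_mem hJclosed
    have : (x : ℕ) ∈ (↑I : Set ℕ) \ {x} := hsub (hI ▸ (by exact_mod_cast hx))
    exact this.2 rfl
  refine ⟨?_, ?_, ?_⟩
  · -- I ⊆ V
    intro x hx
    obtain ⟨r, hr, hhead, _⟩ := hsupp x hx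
    apply hV
    apply Finset.mem_biUnion.2 ⟨r, hr, ?_⟩
    apply Finset.mem_union_left
    rw [hhead]
    simp [Option.elim]
  · -- completion of variables
    intro x _
    constructor
    · exact hsupp x
    · rintro ⟨r, hr, hhead, hb⟩
      have hr' : (⟨r.head, r.body.image (reduceElem I)⟩ : Rule) ∈ reduct P I :=
        Finset.mem_image_of_mem _ hr
      obtain ⟨y, hy, hyI⟩ := hclosed _ hr' ((satBody_reduce I r.body).2 hb)
      simp only [hhead] at hy
      have : x = y := Option.some.injEq _ _ ▸ hy
      exact_mod_cast this ▸ hyI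
  · -- no constraint violated
    intro r hr hhead hb
    have hr' : (⟨r.head, r.body.image (reduceElem I)⟩ : Rule) ∈ reduct P I :=
      Finset.mem_image_of_mem _ hr
    obtain ⟨y, hy, _⟩ := hclosed _ hr' ((satBody_reduce I r.body).2 hb)
    simp [hhead] at hy
end

section
/- Let Π be a standard PARITY_n program and x ← B a rule of Π with head a variable x. If S(B ∪ {x}) is a singleton {I} (where x is added to the body as a rule element), then I has odd cardinality. -/
/-- `P` has no singleton loops: no rule `x ← B` with head a variable `x ∈ var(B)`. -/
def noSingletonLoops (P : Program) : Prop :=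
  ∀ r ∈ P, ∀ x, r.head = some x → RuleElem.pos x ∉ r.body

/-- `S(B)`: the subsets of the ambient variable set `{x_1, …, x_n}` satisfying `B`. -/
def SB (n : ℕ) (B : Finset RuleElem) : Set (Finset ℕ) :=
  {I | I ⊆ Finset.range n ∧ satBody (↑I) B}

/-- Every rule body of `P` is consistent (w.r.t. the ambient variable set). -/
def allBodiesConsistent (n : ℕ) (P : Program) : Prop :=
  ∀ r ∈ P, (SB n r.body).Nonempty

/-- A PARITY_n program is standard if it has no singleton loops, every rule body is
consistent, and for every rule `x ← B` with head a variable `x`, if `S(B ∪ {x})` is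
a singleton then `not not x ∉ B`. -/
def isStandard (n : ℕ) (P : Program) : Prop :=
  isParityProgram n P ∧ noSingletonLoops P ∧ allBodiesConsistent n P ∧
    ∀ r ∈ P, ∀ x, r.head = some x →
      (∃ I : Finset ℕ, SB n (insert (RuleElem.pos x) r.body) = {I}) →
      RuleElem.negneg x ∉ r.body

/-- In a standard PARITY_n program, if `x ← B` is a rule with head a variable `x` and
`S(B ∪ {x})` is a singleton `{I}`, then `I` has odd cardinality. -/
theorem singleton_fullcover_is_odd (n : ℕ) (P : Program) (hP : isStandard n P)
    (x : ℕ) (B : Finset RuleElem) (hr : (⟨some x, B⟩ : Rule) ∈ P)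
    (I : Finset ℕ) (hSB : SB n (insert (RuleElem.pos x) B) = {I}) :
    Odd I.card := by
  obtain ⟨hPar, hLoops, _hCons, hStd⟩ := hP
  have hI : I ∈ SB n (insert (RuleElem.pos x) B) := by rw [hSB]; exact Set.mem_singleton I
  obtain ⟨hIsub, hIsat⟩ := hI
  have hxI : x ∈ I := hIsat (RuleElem.pos x) (Finset.mem_insert_self _ _)
  have hBsat : satBody ↑I B := fun e he => hIsat e (Finset.mem_insert_of_mem he)
  have hposx : RuleElem.pos x ∉ B := hLoops _ hr x rfl
  have hnnx : RuleElem.negneg x ∉ B := hStd _ hr x rfl ⟨I, hSB⟩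
  have hnegx : RuleElem.neg x ∉ B := fun h => (hBsat _ h) hxI
  by_contra hodd
  set I' := I.erase x with hI'def
  have hxI' : x ∉ I' := Finset.notMem_erase _ _
  have hI'B : satBody ↑I' B := by
    intro e he
    cases e with
    | top => trivial
    | bot => exact hBsat _ he
    | pos y =>
      have hy : y ≠ x := fun h => hposx (h ▸ he)
      have h1 : y ∈ I := hBsat _ he
      exact Finset.mem_coe.mpr (Finset.mem_erase.mpr ⟨hy, h1⟩)
    | neg y =>
      have h1 : y ∉ I := hBsat _ he
      intro hmem
      exact h1 (Finset.mem_of_mem_erase (Finset.mem_coe.mp hmem))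
    | negneg y =>
      have hy : y ≠ x := fun h => hnnx (h ▸ he)
      have h1 : y ∈ I := hBsat _ he
      exact Finset.mem_coe.mpr (Finset.mem_erase.mpr ⟨hy, h1⟩)
  have hcardI : I.card = I'.card + 1 := by
    rw [hI'def, Finset.card_erase_of_mem hxI]
    have : 1 ≤ I.card := Finset.card_pos.mpr ⟨x, hxI⟩
    omega
  have hcard : Odd I'.card := by
    rw [Nat.odd_iff] at hodd ⊢
    omega
  have hAns : isAnswerSet P I' :=
    (hPar.2 I').mpr ⟨(Finset.erase_subset _ _).trans hIsub, hcard⟩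
  have hxCn : x ∈ Cn (reduct P I') := by
    intro K hK
    have hrK : (⟨some x, B.image (reduceElem I')⟩ : Rule) ∈ reduct P I' :=
      Finset.mem_image_of_mem _ hr
    have hsub : (↑I' : Set ℕ) ⊆ K := by
      rw [hAns]
      exact Set.sInter_subset_of_mem hK
    have hKB : satBody K (B.image (reduceElem I')) := by
      intro e he
      obtain ⟨e0, he0, rfl⟩ := Finset.mem_image.mp he
      have hs := hI'B e0 he0
      cases e0 with
      | top => trivial
      | bot => exact hs.elim
      | pos y => exact hsub hs
      | neg y =>
        have h1 : y ∉ I' := hs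
        simp [reduceElem, h1, satElem]
      | negneg y =>
        have h1 : y ∈ I' := hs
        simp [reduceElem, h1, satElem]
    obtain ⟨y, hy1, hy2⟩ := hK _ hrK hKB
    have : y = x := by simpa using hy1.symm
    exact this ▸ hy2
  rw [← hAns] at hxCn
  exact hxI' (Finset.mem_coe.mp hxCn)
end
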